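/- The differential operators π_r(e) = ∂/∂y, π_r(h) = ζ∂/∂ζ - 2y∂/∂y, π_r(f) = yζ∂/∂ζ - y²∂/∂y - ζ⁻²∂/∂x on C[x,y,ζ,ζ⁻¹] satisfy the sl₂ commutation relations, and moreover every operator π_r(g) commutes with every operator π_l(g') from the left action π_l(e) = -∂/∂x, π_l(h) = ζ∂/∂ζ - 2x∂/∂x, π_l(f) = -xζ∂/∂ζ + x²∂/∂x + ζ⁻²∂/∂y. -/
import Mathlib


/- STATEMENT 0: The differential operators
   π_l(e) = -∂/∂x, π_l(h) = ζ∂/∂ζ - 2x∂/∂x, π_l(f) = -xζ∂/∂ζ + x²∂/∂x + ζ⁻²∂/∂y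
   acting on ℂ[x,y,ζ,ζ⁻¹] satisfy the sl₂ commutation relations. -/

noncomputable section

/-- The ring ℂ[x,y,ζ,ζ⁻¹] realized as the free ℂ-module on monomials x^m y^n ζ^k. -/
abbrev RMod : Type := (ℕ × ℕ × ℤ) →₀ ℂ

/-- The linear operator sending each basis monomial `p` to `b p`. -/
def opOf (b : ℕ × ℕ × ℤ → RMod) : Module.End ℂ RMod :=
  Finsupp.lsum ℂ fun p => LinearMap.toSpanSingleton ℂ RMod (b p)

/-- ∂/∂x -/
def Dx : Module.End ℂ RMod :=
  opOf fun p => (p.1 : ℂ) • Finsupp.single (p.1 - 1, p.2.1, p.2.2) 1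

/-- ∂/∂y -/
def Dy : Module.End ℂ RMod :=
  opOf fun p => (p.2.1 : ℂ) • Finsupp.single (p.1, p.2.1 - 1, p.2.2) 1

/-- the Euler operator ζ∂/∂ζ -/
def Eul : Module.End ℂ RMod :=
  opOf fun p => (p.2.2 : ℂ) • Finsupp.single p 1

/-- multiplication by x -/
def Mx : Module.End ℂ RMod :=
  opOf fun p => Finsupp.single (p.1 + 1, p.2.1, p.2.2) 1

/-- multiplication by y -/
def My : Module.End ℂ RMod :=
  opOf fun p => Finsupp.single (p.1, p.2.1 + 1, p.2.2) 1

/-- multiplication by ζ^n -/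
def Mzeta (n : ℤ) : Module.End ℂ RMod :=
  opOf fun p => Finsupp.single (p.1, p.2.1, p.2.2 + n) 1

/-- π_l(e) = -∂/∂x -/
def pl_e : Module.End ℂ RMod := -Dx

/-- π_l(h) = ζ∂/∂ζ - 2x∂/∂x -/
def pl_h : Module.End ℂ RMod := Eul - (2 : ℂ) • (Mx * Dx)

/-- π_l(f) = -xζ∂/∂ζ + x²∂/∂x + ζ⁻²∂/∂y -/
def pl_f : Module.End ℂ RMod := -(Mx * Eul) + Mx * Mx * Dx + Mzeta (-2) * Dy

/-- π_r(e) = ∂/∂y -/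
def pr_e : Module.End ℂ RMod := Dy

/-- π_r(h) = ζ∂/∂ζ - 2y∂/∂y -/
def pr_h : Module.End ℂ RMod := Eul - (2 : ℂ) • (My * Dy)

/-- π_r(f) = yζ∂/∂ζ - y²∂/∂y - ζ⁻²∂/∂x -/
def pr_f : Module.End ℂ RMod := My * Eul - My * My * Dy - Mzeta (-2) * Dx

/- STATEMENT 1: π_r satisfies the sl₂ relations, and every π_r-operator
   commutes with every π_l-operator. -/

lemma opOf_single (b : ℕ × ℕ × ℤ → RMod) (p : ℕ × ℕ × ℤ) (c : ℂ) :
    opOf b (Finsupp.single p c) = c • b p := by simp [opOf]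

lemma Dx_single (m n : ℕ) (k : ℤ) (c : ℂ) :
    Dx (Finsupp.single (m, n, k) c) = (c * m) • Finsupp.single (m - 1, n, k) 1 := by
  simp [Dx, opOf_single, smul_smul]

lemma Dy_single (m n : ℕ) (k : ℤ) (c : ℂ) :
    Dy (Finsupp.single (m, n, k) c) = (c * n) • Finsupp.single (m, n - 1, k) 1 := by
  simp [Dy, opOf_single, smul_smul]

lemma Eul_single (m n : ℕ) (k : ℤ) (c : ℂ) :
    Eul (Finsupp.single (m, n, k) c) = (c * k) • Finsupp.single (m, n, k) 1 := by
  simp [Eul, opOf_single, smul_smul]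

lemma Mx_single (m n : ℕ) (k : ℤ) (c : ℂ) :
    Mx (Finsupp.single (m, n, k) c) = c • Finsupp.single (m + 1, n, k) 1 := by
  simp [Mx, opOf_single]

lemma My_single (m n : ℕ) (k : ℤ) (c : ℂ) :
    My (Finsupp.single (m, n, k) c) = c • Finsupp.single (m, n + 1, k) 1 := by
  simp [My, opOf_single]

lemma Mzeta_single (j : ℤ) (m n : ℕ) (k : ℤ) (c : ℂ) :
    Mzeta j (Finsupp.single (m, n, k) c) = c • Finsupp.single (m, n, k + j) 1 := by
  simp [Mzeta, opOf_single]

set_option maxHeartbeats 1000000 in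
theorem statement1 :
    ⁅pr_h, pr_e⁆ = (2 : ℂ) • pr_e ∧
    ⁅pr_h, pr_f⁆ = (-2 : ℂ) • pr_f ∧
    ⁅pr_e, pr_f⁆ = pr_h ∧
    ⁅pr_e, pl_e⁆ = 0 ∧ ⁅pr_e, pl_h⁆ = 0 ∧ ⁅pr_e, pl_f⁆ = 0 ∧
    ⁅pr_h, pl_e⁆ = 0 ∧ ⁅pr_h, pl_h⁆ = 0 ∧ ⁅pr_h, pl_f⁆ = 0 ∧
    ⁅pr_f, pl_e⁆ = 0 ∧ ⁅pr_f, pl_h⁆ = 0 ∧ ⁅pr_f, pl_f⁆ = 0 := by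
  refine ⟨?_, ?_, ?_, ?_, ?_, ?_, ?_, ?_, ?_, ?_, ?_, ?_⟩ <;>
  · rw [LieRing.of_associative_ring_bracket]
    apply Finsupp.lhom_ext
    rintro ⟨m, n, k⟩ c
    simp only [pr_e, pr_h, pr_f, pl_e, pl_h, pl_f, LinearMap.sub_apply, LinearMap.add_apply,
      LinearMap.neg_apply, LinearMap.smul_apply, Module.End.mul_apply, LinearMap.zero_apply,
      map_smul, map_sub, map_add, map_neg, Dx_single, Dy_single, Eul_single, Mx_single,
      My_single, Mzeta_single, smul_smul]
    rcases m with _ | _ | m <;> rcases n with _ | _ | n <;>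
      (try simp_arith only [Nat.sub_sub]) <;> (push_cast; module)

end
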